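/- Let x, y, z > 0 and set p0 = 0, p1 = x, p2 = x + y, p3 = x + y + z. Let h be the unique point of the open upper half-plane lying on both the circle with diameter [p0,p2] and the circle with diameter [p1,p3]. Then |h - p1|^2 / Im h = (y+z)*sqrt(x*y/(z*(x+y+z))). Equivalently, the Euclidean circle tangent to the real axis at the point p1 and passing through h has Euclidean diameter d(x,y,z) := (y+z)*sqrt(x*y/(z*(x+y+z))). -/

import Mathlib

/-!
Writing `h = a + b i`, the two circle equations read `a (a - p₂) + b² = 0` and
`(a - p₁)(a - p₃) + b² = 0`. Their difference is linear in `a` and gives `a = x p₃ / (x + z)`;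
substituting back yields `b² (x + z)² = x y z p₃` and `|h - p₁|² = x y (y + z) / (x + z)`,
so the quotient is `(y + z) · x y / √(x y z p₃)`.
-/

/-- `z` lies on the circle in the plane with diameter the segment `[p, q]` of the real
axis, i.e. the circle with center `(p+q)/2` and radius `(q-p)/2`. -/
def onDiamCircle (p q : ℝ) (z : ℂ) : Prop :=
  ‖z - (((p + q) / 2 : ℝ) : ℂ)‖ = (q - p) / 2

theorem onDiamCircle.re_sub_mul_re_sub_add_im_sq {p q : ℝ} {w : ℂ} (hw : onDiamCircle p q w) :
    (w.re - p) * (w.re - q) + w.im ^ 2 = 0 := by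
  have hsq := congrArg (· ^ 2) hw
  simp only [Complex.sq_norm, Complex.normSq_apply, Complex.sub_re, Complex.sub_im,
    Complex.ofReal_re, Complex.ofReal_im] at hsq
  linear_combination hsq

section Crossing

variable {x y z : ℝ} {w : ℂ}

theorem crossing_re_mul (h1 : onDiamCircle 0 (x + y) w) (h2 : onDiamCircle x (x + y + z) w) :
    w.re * (x + z) = x * (x + y + z) := by
  linear_combination h1.re_sub_mul_re_sub_add_im_sq - h2.re_sub_mul_re_sub_add_im_sq

theorem crossing_im_sq_mul (h1 : onDiamCircle 0 (x + y) w) (h2 : onDiamCircle x (x + y + z) w) :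
    w.im ^ 2 * (x + z) ^ 2 = x * y * z * (x + y + z) := by
  linear_combination (x + z) ^ 2 * h1.re_sub_mul_re_sub_add_im_sq +
    (y * z - (x + z) * w.re) * crossing_re_mul h1 h2

theorem crossing_im_eq (hxz : 0 < x + z) (him : 0 < w.im)
    (h1 : onDiamCircle 0 (x + y) w) (h2 : onDiamCircle x (x + y + z) w) :
    w.im = √(x * y * z * (x + y + z)) / (x + z) := by
  rw [eq_div_iff hxz.ne', ← crossing_im_sq_mul h1 h2, ← mul_pow,
    Real.sqrt_sq (by positivity)]

theorem crossing_norm_sub_sq (hxz : x + z ≠ 0)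
    (h1 : onDiamCircle 0 (x + y) w) (h2 : onDiamCircle x (x + y + z) w) :
    ‖w - x‖ ^ 2 = x * y * (y + z) / (x + z) := by
  rw [eq_div_iff hxz, Complex.sq_norm, Complex.normSq_apply]
  simp only [Complex.sub_re, Complex.sub_im, Complex.ofReal_re, Complex.ofReal_im]
  linear_combination (x + z) * h1.re_sub_mul_re_sub_add_im_sq + (y - x) * crossing_re_mul h1 h2

end Crossing

theorem Real.div_sqrt_mul {u v : ℝ} (hu : 0 ≤ u) : u / √(u * v) = √(u / v) := by
  rw [Real.sqrt_mul hu, Real.sqrt_div hu, ← div_div, Real.div_sqrt]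

/-- **Diameter of the horocycle at `p₁` through the crossing point.**
Let `x, y, z > 0`, and set `p₀ = 0`, `p₁ = x`, `p₂ = x + y`, `p₃ = x + y + z`.
If `h` is a point of the open upper half-plane lying on both the circle with diameter
`[p₀, p₂]` and the circle with diameter `[p₁, p₃]` (there is a unique such point), then
`|h - p₁|² / Im h = (y+z) * √(x*y / (z*(x+y+z)))`; i.e. the Euclidean circle tangent to
the real axis at `p₁` passing through `h` has Euclidean diameter
`d(x,y,z) = (y+z)*√(x*y/(z*(x+y+z)))`. -/
theorem horocycle_diameter_at_crossing (x y z : ℝ) (hx : 0 < x) (hy : 0 < y) (hz : 0 < z)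
    (h : ℂ) (him : 0 < h.im)
    (h1 : onDiamCircle 0 (x + y) h) (h2 : onDiamCircle x (x + y + z) h) :
    ‖h - (x : ℂ)‖ ^ 2 / h.im =
      (y + z) * Real.sqrt (x * y / (z * (x + y + z))) := by
  have hxz : 0 < x + z := by linarith
  rw [crossing_norm_sub_sq hxz.ne' h1 h2, crossing_im_eq hxz him h1 h2,
    ← Real.div_sqrt_mul (by positivity)]
  field_simp
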